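/- For real numbers a, b, c and ωa ≤ ωb with ωa, ωb > 0, the function E(θ) = (ωa/2)[a cos²θ + b sin²θ + c sin(2θ) - 1] + (ωb/2)[b cos²θ + a sin²θ - c sin(2θ) - 1] is minimized over θ ∈ ℝ at θ = (1/2) arctan(2c/(a-b)) if a > b, and at θ = (1/2) arctan(2c/(a-b)) + π/2 if a < b. -/

import Mathlib

/-- Energy after a beam-splitter transformation with angle `θ`. -/
noncomputable def bsEnergy (ωa ωb a b c θ : ℝ) : ℝ :=
  ωa / 2 * (a * Real.cos θ ^ 2 + b * Real.sin θ ^ 2 + c * Real.sin (2 * θ) - 1)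
    + ωb / 2 * (b * Real.cos θ ^ 2 + a * Real.sin θ ^ 2 - c * Real.sin (2 * θ) - 1)

/-!
In the double angle `2θ` the energy is a constant plus `(ωa - ωb)/2` times the harmonic
`A cos 2θ + B sin 2θ` with `A = (a - b)/2`, `B = c`. Since `ωa ≤ ωb`, minimising the energy
means maximising this harmonic, whose maximum `√(A² + B²)` (Cauchy–Schwarz) is attained at
`2θ = arctan (B/A)` when `A > 0` and at `2θ = arctan (B/A) + π` when `A < 0`.
-/

open Real

theorem mul_cos_add_mul_sin_le_sqrt (A B φ : ℝ) : A * cos φ + B * sin φ ≤ √(A ^ 2 + B ^ 2) := by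
  apply le_sqrt_of_sq_le
  nlinarith [sq_nonneg (A * sin φ - B * cos φ), sin_sq_add_cos_sq φ]

theorem mul_cos_arctan_add_mul_sin_arctan {A : ℝ} (hA : 0 < A) (B : ℝ) :
    A * cos (arctan (B / A)) + B * sin (arctan (B / A)) = √(A ^ 2 + B ^ 2) := by
  have hscale : A ^ 2 + B ^ 2 = A ^ 2 * (1 + (B / A) ^ 2) := by field_simp
  have hroot : 0 < √(1 + (B / A) ^ 2) := sqrt_pos.2 (by positivity)
  have hroot_sq : √(1 + (B / A) ^ 2) ^ 2 = 1 + (B / A) ^ 2 := sq_sqrt (by positivity)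
  rw [cos_arctan, sin_arctan, hscale, sqrt_mul (sq_nonneg A), sqrt_sq hA.le]
  generalize √(1 + (B / A) ^ 2) = r at hroot hroot_sq ⊢
  field_simp
  rw [hroot_sq, hscale]

theorem mul_cos_arctan_add_pi_add_mul_sin_arctan_add_pi {A : ℝ} (hA : A < 0) (B : ℝ) :
    A * cos (arctan (B / A) + π) + B * sin (arctan (B / A) + π) = √(A ^ 2 + B ^ 2) := by
  have h := mul_cos_arctan_add_mul_sin_arctan (neg_pos.2 hA) (-B)
  rw [neg_div_neg_eq, neg_sq, neg_sq] at h
  rw [cos_add_pi, sin_add_pi]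
  linarith

section

variable (ωa ωb a b c : ℝ)

theorem bsEnergy_eq_add_harmonic (θ : ℝ) :
    bsEnergy ωa ωb a b c θ =
      (ωa + ωb) / 2 * ((a + b) / 2 - 1)
        + (ωa - ωb) / 2 * ((a - b) / 2 * cos (2 * θ) + c * sin (2 * θ)) := by
  unfold bsEnergy
  rw [cos_two_mul]
  linear_combination (ωa * b + ωb * a) / 2 * sin_sq_add_cos_sq θ

variable {ωa ωb}

theorem bsEnergy_le_of_harmonic_eq_sqrt (hω : ωa ≤ ωb) {θ₀ : ℝ}
    (hθ₀ : (a - b) / 2 * cos (2 * θ₀) + c * sin (2 * θ₀) = √(((a - b) / 2) ^ 2 + c ^ 2))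
    (θ : ℝ) : bsEnergy ωa ωb a b c θ₀ ≤ bsEnergy ωa ωb a b c θ := by
  rw [bsEnergy_eq_add_harmonic, bsEnergy_eq_add_harmonic, hθ₀]
  have hcoef : (ωa - ωb) / 2 ≤ 0 := by linarith
  have hbound := mul_cos_add_mul_sin_le_sqrt ((a - b) / 2) c (2 * θ)
  nlinarith

end

theorem bsEnergy_min_general (ωa ωb a b c : ℝ) (hω : ωa ≤ ωb) :
    (a > b → ∀ θ : ℝ,
      bsEnergy ωa ωb a b c (1 / 2 * Real.arctan (2 * c / (a - b))) ≤ bsEnergy ωa ωb a b c θ) ∧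
    (a < b → ∀ θ : ℝ,
      bsEnergy ωa ωb a b c (1 / 2 * Real.arctan (2 * c / (a - b)) + Real.pi / 2)
        ≤ bsEnergy ωa ωb a b c θ) := by
  have hslope : 2 * c / (a - b) = c / ((a - b) / 2) := by
    rw [div_div_eq_mul_div, mul_comm]
  refine ⟨fun hab => bsEnergy_le_of_harmonic_eq_sqrt a b c hω ?_,
    fun hab => bsEnergy_le_of_harmonic_eq_sqrt a b c hω ?_⟩
  · rw [show 2 * (1 / 2 * arctan (2 * c / (a - b))) = arctan (2 * c / (a - b)) by ring, hslope]
    exact mul_cos_arctan_add_mul_sin_arctan (by linarith) c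
  · rw [show 2 * (1 / 2 * arctan (2 * c / (a - b)) + π / 2) = arctan (2 * c / (a - b)) + π by
      ring, hslope]
    exact mul_cos_arctan_add_pi_add_mul_sin_arctan_add_pi (by linarith) c

/-- The beam-splitter energy is minimized at `θ = (1/2) arctan (2c/(a-b))` if `a > b`,
and at `θ = (1/2) arctan (2c/(a-b)) + π/2` if `a < b`. -/
theorem bsEnergy_min (ωa ωb a b c : ℝ) (hωa : 0 < ωa) (hωb : 0 < ωb) (hω : ωa ≤ ωb) :
    (a > b → ∀ θ : ℝ,
      bsEnergy ωa ωb a b c (1 / 2 * Real.arctan (2 * c / (a - b))) ≤ bsEnergy ωa ωb a b c θ) ∧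
    (a < b → ∀ θ : ℝ,
      bsEnergy ωa ωb a b c (1 / 2 * Real.arctan (2 * c / (a - b)) + Real.pi / 2)
        ≤ bsEnergy ωa ωb a b c θ) :=
  bsEnergy_min_general ωa ωb a b c hω
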